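/- Let a₁, a₂, b₁, b₂ be nonstandard elements of M. For each ℓ ∈ {0, 1, 2, 3, 4}: if a₁ Eℓ b₁ and a₂ Eℓ b₂, then (a₁ + a₂) Eℓ (b₁ + b₂). -/

import Mathlib

/-- `a` is a nonstandard element: above every natural number cast. -/
def Nonstd {M : Type*} [CommSemiring M] [LinearOrder M] [IsStrictOrderedRing M] (a : M) : Prop :=
  ∀ n : ℕ, (n : M) < a

def E0 {M : Type*} [CommSemiring M] [LinearOrder M] [IsStrictOrderedRing M] (a b : M) : Prop :=
  ∃ n : ℕ, a < b + (n : M) ∧ b < a + (n : M)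

def E1 {M : Type*} [CommSemiring M] [LinearOrder M] [IsStrictOrderedRing M] (a b : M) : Prop :=
  ∃ c : M, (∀ n : ℕ, (n : M) * c < a ∧ (n : M) * c < b) ∧ a < b + c ∧ b < a + c

def E2 {M : Type*} [CommSemiring M] [LinearOrder M] [IsStrictOrderedRing M] (a b : M) : Prop :=
  ∃ n : ℕ, a < (n : M) * b ∧ b < (n : M) * a

def E3 {M : Type*} [CommSemiring M] [LinearOrder M] [IsStrictOrderedRing M] (a b : M) : Prop :=
  ∃ c : M, (∀ n : ℕ, c ^ n < a ∧ c ^ n < b) ∧ a < b * c ∧ b < a * c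

def E4 {M : Type*} [CommSemiring M] [LinearOrder M] [IsStrictOrderedRing M] (a b : M) : Prop :=
  ∃ n : ℕ, a < b ^ n ∧ b < a ^ n

/-- `a E⁵ b`: some order automorphism of `M` maps `a` to `b`. -/
def E5 {M : Type*} [CommSemiring M] [LinearOrder M] [IsStrictOrderedRing M] (a b : M) : Prop :=
  ∃ f : M ≃o M, f a = b

/-- `E` is a convex equivalence relation on the nonstandard elements of `M`. -/
def IsConvexEquiv {M : Type*} [CommSemiring M] [LinearOrder M] [IsStrictOrderedRing M] (E : M → M → Prop) : Prop :=
  (∀ a : M, Nonstd a → E a a) ∧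
  (∀ a b : M, Nonstd a → Nonstd b → E a b → E b a) ∧
  (∀ a b c : M, Nonstd a → Nonstd b → Nonstd c → E a b → E b c → E a c) ∧
  (∀ a b c : M, Nonstd a → Nonstd b → Nonstd c → a ≤ b → b ≤ c → E a c → E a b)

/-- An almost `{<,+}`-isomorphism: an order isomorphism whose additivity error is finite. -/
def IsAlmostAddIso {M₁ M₂ : Type*} [CommSemiring M₁] [LinearOrder M₁] [IsStrictOrderedRing M₁]
    [CommSemiring M₂] [LinearOrder M₂] [IsStrictOrderedRing M₂] (f : M₁ ≃o M₂) : Prop :=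
  ∀ a b : M₁, ∃ n : ℕ, f (a + b) < f a + f b + (n : M₂) ∧ f a + f b < f (a + b) + (n : M₂)

/-- `M` is 2-order-rigid. -/
def OrderRigid2 (M : Type*) [CommSemiring M] [LinearOrder M] [IsStrictOrderedRing M] : Prop :=
  ∀ a b : M, Nonstd a → Nonstd b →
    Nonempty ({x : M // x < a} ≃o {x : M // x < b}) → E2 a b

/-- `M` is 3-order-rigid. -/
def OrderRigid3 (M : Type*) [CommSemiring M] [LinearOrder M] [IsStrictOrderedRing M] : Prop :=
  ∀ a b : M, Nonstd a → Nonstd b →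
    Nonempty ({x : M // x < a} ≃o {x : M // x < b}) → E3 a b

/-- `M` is 4-order-rigid. -/
def OrderRigid4 (M : Type*) [CommSemiring M] [LinearOrder M] [IsStrictOrderedRing M] : Prop :=
  ∀ a b : M, Nonstd a → Nonstd b →
    Nonempty ({x : M // x < a} ≃o {x : M // x < b}) → E4 a b

/-!
Each relation asks for a witness bounding `a` in terms of `b` and `b` in terms of `a`, and such
one-sided bounds add up: for `E⁰` and `E¹` take the sum of the witnesses, for `E²` and `E³` their
maximum, and for `E⁴` their maximum plus one, since `a₁ < b₁ ^ n` and `a₂ < b₂ ^ n` give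
`a₁ + a₂ < 2 (b₁ + b₂) ^ n ≤ (b₁ + b₂) ^ (n + 1)`. Nonstandard elements are at least `2`, which
supplies the monotonicity.
-/

section

variable {M : Type*} [CommSemiring M] [LinearOrder M] [IsStrictOrderedRing M]

theorem Nonstd.pos {a : M} (ha : Nonstd a) : 0 < a := by
  simpa using ha 0

theorem Nonstd.two_le_add {a b : M} (ha : Nonstd a) (hb : Nonstd b) : (2 : M) ≤ a + b :=
  (by exact_mod_cast (ha 2).le : (2 : M) ≤ a).trans (le_add_of_nonneg_right hb.pos.le)

theorem add_lt_max_mul_add {a₁ a₂ b₁ b₂ c₁ c₂ : M} (hb₁ : 0 ≤ b₁) (hb₂ : 0 ≤ b₂)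
    (h₁ : a₁ < c₁ * b₁) (h₂ : a₂ < c₂ * b₂) : a₁ + a₂ < max c₁ c₂ * (b₁ + b₂) :=
  calc a₁ + a₂ < c₁ * b₁ + c₂ * b₂ := add_lt_add h₁ h₂
    _ ≤ max c₁ c₂ * b₁ + max c₁ c₂ * b₂ := by gcongr <;> simp
    _ = max c₁ c₂ * (b₁ + b₂) := (mul_add _ _ _).symm

theorem add_lt_add_pow_max_succ {u v x y : M} {n₁ n₂ : ℕ} (hx : 0 ≤ x) (hy : 0 ≤ y)
    (hxy : 2 ≤ x + y) (hu : u < x ^ n₁) (hv : v < y ^ n₂) :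
    u + v < (x + y) ^ (max n₁ n₂ + 1) := by
  have hxy₁ : 1 ≤ x + y := one_le_two.trans hxy
  have hx' : x ^ n₁ ≤ (x + y) ^ max n₁ n₂ :=
    (pow_le_pow_left₀ hx (le_add_of_nonneg_right hy) n₁).trans
      (pow_le_pow_right₀ hxy₁ (le_max_left _ _))
  have hy' : y ^ n₂ ≤ (x + y) ^ max n₁ n₂ :=
    (pow_le_pow_left₀ hy (le_add_of_nonneg_left hx) n₂).trans
      (pow_le_pow_right₀ hxy₁ (le_max_right _ _))
  calc u + v < (x + y) ^ max n₁ n₂ * 2 := by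
        rw [mul_two]; exact add_lt_add (hu.trans_le hx') (hv.trans_le hy')
    _ ≤ (x + y) ^ max n₁ n₂ * (x + y) := by gcongr
    _ = (x + y) ^ (max n₁ n₂ + 1) := (pow_succ _ _).symm

variable {a₁ a₂ b₁ b₂ : M}

theorem E0.add (h₁ : E0 a₁ b₁) (h₂ : E0 a₂ b₂) : E0 (a₁ + a₂) (b₁ + b₂) := by
  obtain ⟨n₁, hab₁, hba₁⟩ := h₁
  obtain ⟨n₂, hab₂, hba₂⟩ := h₂
  refine ⟨n₁ + n₂, ?_, ?_⟩ <;> rw [Nat.cast_add]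
  · rw [add_add_add_comm _ b₂]; exact add_lt_add hab₁ hab₂
  · rw [add_add_add_comm _ a₂]; exact add_lt_add hba₁ hba₂

theorem E1.add (h₁ : E1 a₁ b₁) (h₂ : E1 a₂ b₂) : E1 (a₁ + a₂) (b₁ + b₂) := by
  obtain ⟨c₁, hc₁, hab₁, hba₁⟩ := h₁
  obtain ⟨c₂, hc₂, hab₂, hba₂⟩ := h₂
  refine ⟨c₁ + c₂, fun n => ?_, ?_, ?_⟩
  · rw [mul_add]
    exact ⟨add_lt_add (hc₁ n).1 (hc₂ n).1, add_lt_add (hc₁ n).2 (hc₂ n).2⟩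
  · rw [add_add_add_comm _ b₂]; exact add_lt_add hab₁ hab₂
  · rw [add_add_add_comm _ a₂]; exact add_lt_add hba₁ hba₂

theorem E2.add (ha₁ : 0 ≤ a₁) (ha₂ : 0 ≤ a₂) (hb₁ : 0 ≤ b₁) (hb₂ : 0 ≤ b₂)
    (h₁ : E2 a₁ b₁) (h₂ : E2 a₂ b₂) : E2 (a₁ + a₂) (b₁ + b₂) := by
  obtain ⟨n₁, hab₁, hba₁⟩ := h₁
  obtain ⟨n₂, hab₂, hba₂⟩ := h₂
  refine ⟨max n₁ n₂, ?_, ?_⟩ <;> rw [Nat.cast_max]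
  · exact add_lt_max_mul_add hb₁ hb₂ hab₁ hab₂
  · exact add_lt_max_mul_add ha₁ ha₂ hba₁ hba₂

theorem E3.add (ha₁ : 0 ≤ a₁) (ha₂ : 0 ≤ a₂) (hb₁ : 0 ≤ b₁) (hb₂ : 0 ≤ b₂)
    (h₁ : E3 a₁ b₁) (h₂ : E3 a₂ b₂) : E3 (a₁ + a₂) (b₁ + b₂) := by
  obtain ⟨c₁, hc₁, hab₁, hba₁⟩ := h₁
  obtain ⟨c₂, hc₂, hab₂, hba₂⟩ := h₂
  refine ⟨max c₁ c₂, fun n => ?_, ?_, ?_⟩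
  · rcases max_choice c₁ c₂ with hc | hc <;> rw [hc]
    · exact ⟨(hc₁ n).1.trans_le (le_add_of_nonneg_right ha₂),
        (hc₁ n).2.trans_le (le_add_of_nonneg_right hb₂)⟩
    · exact ⟨(hc₂ n).1.trans_le (le_add_of_nonneg_left ha₁),
        (hc₂ n).2.trans_le (le_add_of_nonneg_left hb₁)⟩
  · rw [mul_comm] at hab₁ hab₂ ⊢; exact add_lt_max_mul_add hb₁ hb₂ hab₁ hab₂
  · rw [mul_comm] at hba₁ hba₂ ⊢; exact add_lt_max_mul_add ha₁ ha₂ hba₁ hba₂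

theorem E4.add (ha₁ : Nonstd a₁) (ha₂ : Nonstd a₂) (hb₁ : Nonstd b₁) (hb₂ : Nonstd b₂)
    (h₁ : E4 a₁ b₁) (h₂ : E4 a₂ b₂) : E4 (a₁ + a₂) (b₁ + b₂) := by
  obtain ⟨n₁, hab₁, hba₁⟩ := h₁
  obtain ⟨n₂, hab₂, hba₂⟩ := h₂
  exact ⟨max n₁ n₂ + 1,
    add_lt_add_pow_max_succ hb₁.pos.le hb₂.pos.le (hb₁.two_le_add hb₂) hab₁ hab₂,
    add_lt_add_pow_max_succ ha₁.pos.le ha₂.pos.le (ha₁.two_le_add ha₂) hba₁ hba₂⟩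

end

theorem E_add_general {M : Type*} [CommSemiring M] [LinearOrder M] [IsStrictOrderedRing M]
    (a₁ a₂ b₁ b₂ : M) (ha₁ : Nonstd a₁) (ha₂ : Nonstd a₂)
    (hb₁ : Nonstd b₁) (hb₂ : Nonstd b₂) :
    (E0 a₁ b₁ → E0 a₂ b₂ → E0 (a₁ + a₂) (b₁ + b₂)) ∧
    (E1 a₁ b₁ → E1 a₂ b₂ → E1 (a₁ + a₂) (b₁ + b₂)) ∧
    (E2 a₁ b₁ → E2 a₂ b₂ → E2 (a₁ + a₂) (b₁ + b₂)) ∧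
    (E3 a₁ b₁ → E3 a₂ b₂ → E3 (a₁ + a₂) (b₁ + b₂)) ∧
    (E4 a₁ b₁ → E4 a₂ b₂ → E4 (a₁ + a₂) (b₁ + b₂)) :=
  ⟨E0.add, E1.add, E2.add ha₁.pos.le ha₂.pos.le hb₁.pos.le hb₂.pos.le,
    E3.add ha₁.pos.le ha₂.pos.le hb₁.pos.le hb₂.pos.le, E4.add ha₁ ha₂ hb₁ hb₂⟩

/-- each of `E⁰, E¹, E², E³, E⁴` is preserved under addition. -/
theorem E_add {M : Type*} [CommSemiring M] [LinearOrder M] [IsStrictOrderedRing M]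
    (h0 : ∀ x : M, 0 ≤ x)
    (a₁ a₂ b₁ b₂ : M) (ha₁ : Nonstd a₁) (ha₂ : Nonstd a₂)
    (hb₁ : Nonstd b₁) (hb₂ : Nonstd b₂) :
    (E0 a₁ b₁ → E0 a₂ b₂ → E0 (a₁ + a₂) (b₁ + b₂)) ∧
    (E1 a₁ b₁ → E1 a₂ b₂ → E1 (a₁ + a₂) (b₁ + b₂)) ∧
    (E2 a₁ b₁ → E2 a₂ b₂ → E2 (a₁ + a₂) (b₁ + b₂)) ∧
    (E3 a₁ b₁ → E3 a₂ b₂ → E3 (a₁ + a₂) (b₁ + b₂)) ∧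
    (E4 a₁ b₁ → E4 a₂ b₂ → E4 (a₁ + a₂) (b₁ + b₂)) :=
  E_add_general a₁ a₂ b₁ b₂ ha₁ ha₂ hb₁ hb₂
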